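/- Let y_n denote the coefficient of X^n in the power series (1 + X) · (1 − 2X − X²)⁻¹ ∈ ℝ⟦X⟧ (the power series 1 − 2X − X² is a unit since its constant coefficient is 1). Then for every n ∈ ℕ, y_n = ((−1)^n / (2√2)) · ( (−2+√2)/(1+√2)^n + (2+√2)/(1−√2)^n ). -/

import Mathlib

/-!
Over ℝ the denominator factors as `1 - 2X - X² = (1 - rX)(1 - sX)` with `r, s = 1 ± √2`, so by
partial fractions the series is `c · Σ rⁿXⁿ + d · Σ sⁿXⁿ` for suitable `c, d`. Since `rs = -1`,
the factor `(-1)ⁿ` in the stated formula turns `1 / rⁿ` into `sⁿ` and `1 / sⁿ` into `rⁿ`.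
-/

open PowerSeries

namespace PowerSeries

variable {R : Type*} [CommRing R]

theorem mk_pow_mul_one_sub_C_mul_X (r : R) : mk (r ^ ·) * (1 - C r * X) = 1 := by
  simpa [rescale_mk, rescale_X] using congrArg (rescale r) (mk_one_mul_one_sub_eq_one R)

theorem mul_invOfUnit_eq_of_partial_fractions {r s a b c d : R} (hconst : c + d = a)
    (hlin : -(c * s + d * r) = b) :
    (C a + C b * X) * invOfUnit ((1 - C r * X) * (1 - C s * X)) 1 =
      C c * mk (r ^ ·) + C d * mk (s ^ ·) := by
  set Q := (1 - C r * X) * (1 - C s * X)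
  have hQ : Q * invOfUnit Q 1 = 1 := mul_invOfUnit Q 1 (by simp [Q])
  have hnum : C a + C b * X = (C c * mk (r ^ ·) + C d * mk (s ^ ·)) * Q := by
    calc C a + C b * X = C c * (1 - C s * X) + C d * (1 - C r * X) := by
          rw [← hconst, ← hlin]; simp only [map_add, map_neg, map_mul]; ring
      _ = _ := by
          simp only [Q]
          linear_combination (C c * (1 - C s * X)) * (mk_pow_mul_one_sub_C_mul_X r).symm +
            (C d * (1 - C r * X)) * (mk_pow_mul_one_sub_C_mul_X s).symm
  rw [hnum, mul_assoc, hQ, mul_one]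

end PowerSeries

theorem stmt_11 (n : ℕ) :
    coeff (R := ℝ) n ((1 + X) * invOfUnit (1 - 2 * X - X ^ 2) 1) =
      (-1 : ℝ) ^ n / (2 * Real.sqrt 2) *
        ((-2 + Real.sqrt 2) / (1 + Real.sqrt 2) ^ n +
          (2 + Real.sqrt 2) / (1 - Real.sqrt 2) ^ n) := by
  have hsq : Real.sqrt 2 ^ 2 = 2 := Real.sq_sqrt zero_le_two
  have hrs : (1 + Real.sqrt 2) * (1 - Real.sqrt 2) = -1 := by linear_combination -hsq
  have hsqrt : Real.sqrt 2 ≠ 0 := by positivity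
  have hr : 1 + Real.sqrt 2 ≠ 0 := by positivity
  have hs : 1 - Real.sqrt 2 ≠ 0 := right_ne_zero_of_mul (hrs ▸ neg_ne_zero.mpr one_ne_zero)
  have hfactor : (1 - 2 * X - X ^ 2 : ℝ⟦X⟧) =
      (1 - C (1 + Real.sqrt 2) * X) * (1 - C (1 - Real.sqrt 2) * X) := by
    have hsum : C (1 + Real.sqrt 2) + C (1 - Real.sqrt 2) = (2 : ℝ⟦X⟧) := by
      rw [← map_add, show 1 + Real.sqrt 2 + (1 - Real.sqrt 2) = 2 by ring, map_ofNat]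
    have hprod : C (1 + Real.sqrt 2) * C (1 - Real.sqrt 2) = (-1 : ℝ⟦X⟧) := by
      rw [← map_mul, hrs, map_neg, map_one]
    linear_combination X * hsum - X ^ 2 * hprod
  have hnum : (1 + X : ℝ⟦X⟧) = C 1 + C 1 * X := by simp
  rw [hfactor, hnum, mul_invOfUnit_eq_of_partial_fractions
    (c := (2 + Real.sqrt 2) / (2 * Real.sqrt 2)) (d := (Real.sqrt 2 - 2) / (2 * Real.sqrt 2))
    (by field_simp; ring) (by field_simp; ring)]
  simp only [map_add, coeff_C_mul, coeff_mk]
  have hunit : (-1 : ℝ) ^ n = (1 + Real.sqrt 2) ^ n * (1 - Real.sqrt 2) ^ n := by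
    rw [← mul_pow, hrs]
  rw [hunit]
  field_simp
  ring
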